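/- Let σ_n > 0, σ_d > 0, 0 ≤ ρ < 1, z ≥ 0, and set b = σ_n²/σ_d². Then ∫₀^∞ (y / (4 σ_n² σ_d² (1−ρ))) · exp(−(z/σ_n² + 1/σ_d²) · y / (2(1−ρ))) · ∑_{k=0}^∞ (ρ z y² / ((1−ρ)² σ_n² σ_d²))ᵏ / (4ᵏ (k!)²) dy = (1−ρ) b ∑_{k=0}^∞ ((2k+1)!/(k!)²) (ρ b)ᵏ zᵏ / (z+b)^{2k+2}, where both the integral and the series on the right-hand side converge. -/

import Mathlib

/-!
Expanding `I₀` into its power series, the integrand becomes a series of nonnegative terms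
`y ^ (2k+1) e^{-τ y}` (with `τ = (z + b) / (2 (1 - ρ) σ_n²)`), each integrating to a factorial
`(2k+1)! / τ^(2k+2)`. The resulting series has ratio `4 ρ b z / (z + b)² < 1` up to the
central binomial growth `(2k+1)! / (k!)² ≤ (k+1) 4^k`, so it converges; as the terms are
nonnegative, this convergence justifies both the integrability and the termwise integration.
-/

open MeasureTheory Nat

section TermwiseIntegration

variable {α E : Type*} [MeasurableSpace α] {μ : Measure α}
  [NormedAddCommGroup E] [CompleteSpace E]

theorem integrable_tsum_of_summable_integral_norm {ι : Type*} [Countable ι] {F : ι → α → E}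
    (hF_int : ∀ i, Integrable (F i) μ) (hF_sum : Summable fun i ↦ ∫ a, ‖F i a‖ ∂μ) :
    Integrable (fun a ↦ ∑' i, F i a) μ := by
  refine ⟨AEStronglyMeasurable.tsum fun i ↦ (hF_int i).1, ?_⟩
  calc ∫⁻ a, ‖∑' i, F i a‖ₑ ∂μ ≤ ∫⁻ a, ∑' i, ‖F i a‖ₑ ∂μ :=
        lintegral_mono fun a ↦ enorm_tsum_le_tsum_enorm
    _ = ∑' i, ENNReal.ofReal (∫ a, ‖F i a‖ ∂μ) := by
        rw [lintegral_tsum fun i ↦ (hF_int i).1.enorm]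
        simp_rw [ofReal_integral_norm_eq_lintegral_enorm (hF_int _)]
    _ = ENNReal.ofReal (∑' i, ∫ a, ‖F i a‖ ∂μ) :=
        (ENNReal.ofReal_tsum_of_nonneg (fun i ↦ integral_nonneg fun a ↦ norm_nonneg _) hF_sum).symm
    _ < ⊤ := ENNReal.ofReal_lt_top

end TermwiseIntegration

theorem integrableOn_pow_mul_exp_neg_mul_Ioi (n : ℕ) {τ : ℝ} (hτ : 0 < τ) :
    IntegrableOn (fun y : ℝ ↦ y ^ n * Real.exp (-(τ * y))) (Set.Ioi 0) := by
  refine (integrableOn_rpow_mul_exp_neg_mul_rpow (p := 1) (s := n)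
    (by linarith [n.cast_nonneg (α := ℝ)]) one_pos hτ).congr_fun (fun y _ ↦ ?_) measurableSet_Ioi
  simp only [Real.rpow_natCast, Real.rpow_one, neg_mul]

theorem integral_pow_mul_exp_neg_mul_Ioi (n : ℕ) {τ : ℝ} (hτ : 0 < τ) :
    ∫ y in Set.Ioi (0 : ℝ), y ^ n * Real.exp (-(τ * y)) = n ! / τ ^ (n + 1) := by
  have h := Real.integral_rpow_mul_exp_neg_mul_Ioi (a := n + 1) (by positivity) hτ
  simp_rw [add_sub_cancel_right, Real.Gamma_nat_eq_factorial, ← Nat.cast_succ, Real.rpow_natCast] at h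
  rw [h, one_div_pow, one_div_mul_eq_div]

theorem factorial_two_mul_add_one_div_sq_le (k : ℕ) :
    ((2 * k + 1)! : ℝ) / (k ! : ℝ) ^ 2 ≤ (k + 1) * 4 ^ k := by
  have hchoose : ((2 * k + 1)! : ℝ) = (2 * k + 1).choose k * k ! * (k + 1)! := by
    rw [← Nat.choose_mul_factorial_mul_factorial (by omega : k ≤ 2 * k + 1),
      show 2 * k + 1 - k = k + 1 by omega]
    push_cast; ring
  rw [div_le_iff₀ (by positivity), hchoose, Nat.factorial_succ]
  have hmiddle : ((2 * k + 1).choose k : ℝ) ≤ 4 ^ k := mod_cast Nat.choose_middle_le_pow k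
  push_cast
  calc ((2 * k + 1).choose k : ℝ) * k ! * ((k + 1) * k !)
      = (2 * k + 1).choose k * ((k + 1) * k ! ^ 2) := by ring
    _ ≤ 4 ^ k * ((k + 1) * k ! ^ 2) := by gcongr
    _ = (k + 1) * 4 ^ k * k ! ^ 2 := by ring

theorem summable_factorial_two_mul_add_one_div_sq_mul_pow {q : ℝ} (hq0 : 0 ≤ q) (hq : q < 1 / 4) :
    Summable fun k : ℕ ↦ ((2 * k + 1)! : ℝ) / (k ! : ℝ) ^ 2 * q ^ k := by
  have h4q : ‖4 * q‖ < 1 := by rw [Real.norm_of_nonneg (by positivity)]; linarith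
  have hmajor : Summable fun k : ℕ ↦ ((k : ℝ) + 1) * (4 * q) ^ k := by
    simpa [add_mul, pow_one] using
      (summable_pow_mul_geometric_of_norm_lt_one 1 h4q).add (summable_geometric_of_norm_lt_one h4q)
  refine hmajor.of_nonneg_of_le (fun k ↦ by positivity) fun k ↦ ?_
  rw [mul_pow, ← mul_assoc]
  exact mul_le_mul_of_nonneg_right (factorial_two_mul_add_one_div_sq_le k) (by positivity)

/-- `besselI0Sq (t ^ 2) = I₀ t`, the modified Bessel function of the first kind of order zero. -/
noncomputable def besselI0Sq (s : ℝ) : ℝ :=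
  ∑' k : ℕ, s ^ k / (4 ^ k * (k ! : ℝ) ^ 2)

section LaplaceTransform

variable {τ c : ℝ}

theorem mul_exp_neg_mul_mul_besselI0Sq_term (y : ℝ) (k : ℕ) :
    y * Real.exp (-(τ * y)) * ((c * y ^ 2) ^ k / (4 ^ k * (k ! : ℝ) ^ 2)) =
      (c / 4) ^ k / (k ! : ℝ) ^ 2 * (y ^ (2 * k + 1) * Real.exp (-(τ * y))) := by
  rw [mul_pow, ← pow_mul, div_pow]
  field_simp
  ring

theorem integral_mul_exp_neg_mul_mul_besselI0Sq_term (hτ : 0 < τ) (k : ℕ) :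
    ∫ y in Set.Ioi (0 : ℝ), y * Real.exp (-(τ * y)) * ((c * y ^ 2) ^ k / (4 ^ k * (k ! : ℝ) ^ 2)) =
      ((2 * k + 1)! : ℝ) / (k ! : ℝ) ^ 2 * (c / (4 * τ ^ 2)) ^ k / τ ^ 2 := by
  simp_rw [mul_exp_neg_mul_mul_besselI0Sq_term]
  rw [integral_const_mul, integral_pow_mul_exp_neg_mul_Ioi _ hτ, div_pow c, div_pow c, mul_pow,
    ← pow_mul, pow_add τ (2 * k) 2]
  field_simp

theorem integrableOn_and_hasSum_integral_mul_exp_neg_mul_besselI0Sq (hτ : 0 < τ) (hc : 0 ≤ c)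
    (hcτ : c < τ ^ 2) :
    IntegrableOn (fun y ↦ y * Real.exp (-(τ * y)) * besselI0Sq (c * y ^ 2)) (Set.Ioi 0) ∧
      HasSum (fun k : ℕ ↦ ((2 * k + 1)! : ℝ) / (k ! : ℝ) ^ 2 * (c / (4 * τ ^ 2)) ^ k / τ ^ 2)
        (∫ y in Set.Ioi 0, y * Real.exp (-(τ * y)) * besselI0Sq (c * y ^ 2)) := by
  set F : ℕ → ℝ → ℝ := fun k y ↦
    y * Real.exp (-(τ * y)) * ((c * y ^ 2) ^ k / (4 ^ k * (k ! : ℝ) ^ 2))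
  have hF_int (k : ℕ) : IntegrableOn (F k) (Set.Ioi 0) := by
    simp_rw [F, mul_exp_neg_mul_mul_besselI0Sq_term]
    exact (integrableOn_pow_mul_exp_neg_mul_Ioi _ hτ).const_mul _
  have hF_norm (k : ℕ) : ∫ y in Set.Ioi 0, ‖F k y‖ = ∫ y in Set.Ioi 0, F k y :=
    setIntegral_congr_fun measurableSet_Ioi fun y hy ↦
      Real.norm_of_nonneg (by have : 0 < y := hy; positivity)
  have hF_sum : Summable fun k ↦ ∫ y in Set.Ioi 0, ‖F k y‖ := by
    simp_rw [hF_norm, F, integral_mul_exp_neg_mul_mul_besselI0Sq_term hτ]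
    refine (summable_factorial_two_mul_add_one_div_sq_mul_pow (by positivity) ?_).div_const _
    rw [div_lt_iff₀ (by positivity)]
    linarith
  have htsum : (fun y ↦ y * Real.exp (-(τ * y)) * besselI0Sq (c * y ^ 2)) = fun y ↦ ∑' k, F k y :=
    funext fun y ↦ tsum_mul_left.symm
  rw [htsum]
  refine ⟨integrable_tsum_of_summable_integral_norm hF_int hF_sum, ?_⟩
  simpa only [F, integral_mul_exp_neg_mul_mul_besselI0Sq_term hτ] using
    hasSum_integral_of_summable_integral_norm hF_int hF_sum

end LaplaceTransform

/-- The density-of-ratio integral of the proof of Theorem 2: for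
`σ_n, σ_d > 0`, `0 ≤ ρ < 1`, `z ≥ 0`, and `b = σ_n²/σ_d²`,
`∫₀^∞ (y/(4σ_n²σ_d²(1−ρ))) e^{−(z/σ_n²+1/σ_d²)y/(2(1−ρ))}
  ∑ₖ (ρ z y²/((1−ρ)²σ_n²σ_d²))ᵏ/(4ᵏ(k!)²) dy
  = (1−ρ) b ∑ₖ ((2k+1)!/(k!)²) (ρb)ᵏ zᵏ/(z+b)^{2k+2}`,
with the integral and the right-hand series both convergent. -/
theorem density_of_ratio_integral (σn σd ρ z : ℝ) (hσn : 0 < σn) (hσd : 0 < σd)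
    (hρ0 : 0 ≤ ρ) (hρ1 : ρ < 1) (hz : 0 ≤ z) :
    let b : ℝ := σn ^ 2 / σd ^ 2
    let f : ℝ → ℝ := fun y =>
      y / (4 * σn ^ 2 * σd ^ 2 * (1 - ρ)) *
        Real.exp (-((z / σn ^ 2 + 1 / σd ^ 2) * y / (2 * (1 - ρ)))) *
        ∑' k : ℕ, (ρ * z * y ^ 2 / ((1 - ρ) ^ 2 * σn ^ 2 * σd ^ 2)) ^ k /
          (4 ^ k * (Nat.factorial k : ℝ) ^ 2)
    let g : ℕ → ℝ := fun k =>
      (Nat.factorial (2 * k + 1) : ℝ) / (Nat.factorial k : ℝ) ^ 2 *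
        (ρ * b) ^ k * z ^ k / (z + b) ^ (2 * k + 2)
    IntegrableOn f (Set.Ioi 0) ∧ Summable g ∧
      (∫ y in Set.Ioi (0 : ℝ), f y) = (1 - ρ) * b * ∑' k : ℕ, g k := by
  intro b f g
  have h1ρ : 0 < 1 - ρ := sub_pos.2 hρ1
  have hb : 0 < b := by positivity
  have hzb : 0 < z + b := by positivity
  set A := 4 * σn ^ 2 * σd ^ 2 * (1 - ρ)
  set τ := (z / σn ^ 2 + 1 / σd ^ 2) / (2 * (1 - ρ))
  set c := ρ * z / ((1 - ρ) ^ 2 * σn ^ 2 * σd ^ 2)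
  have hτ_eq : τ = (z + b) / (2 * (1 - ρ) * σn ^ 2) := by
    simp only [τ, b]; field_simp
  have hτ : 0 < τ := by positivity
  have hc : 0 ≤ c := by positivity
  have hq_eq : c / (4 * τ ^ 2) = ρ * b * z / (z + b) ^ 2 := by
    rw [hτ_eq]; simp only [c, b]; field_simp; ring
  have hAτ : A * ((1 - ρ) * b) * τ ^ 2 = (z + b) ^ 2 := by
    rw [hτ_eq]; simp only [A, b]; field_simp; ring
  have hcτ : c < τ ^ 2 := by
    have hq_lt : ρ * b * z / (z + b) ^ 2 < 1 / 4 := by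
      rw [div_lt_iff₀ (by positivity)]
      nlinarith [mul_pos h1ρ (mul_pos hzb hzb), mul_nonneg hρ0 (sq_nonneg (z - b))]
    rw [← hq_eq, div_lt_iff₀ (by positivity)] at hq_lt
    linarith
  have hf : f = fun y ↦ A⁻¹ * (y * Real.exp (-(τ * y)) * besselI0Sq (c * y ^ 2)) := by
    funext y
    have hcy : ρ * z * y ^ 2 / ((1 - ρ) ^ 2 * σn ^ 2 * σd ^ 2) = c * y ^ 2 := by
      simp only [c]; ring
    simp only [f, besselI0Sq, τ, hcy, mul_div_right_comm _ y]
    ring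
  obtain ⟨hint, hsum⟩ := integrableOn_and_hasSum_integral_mul_exp_neg_mul_besselI0Sq hτ hc hcτ
  set I := ∫ y in Set.Ioi 0, y * Real.exp (-(τ * y)) * besselI0Sq (c * y ^ 2)
  have hg : HasSum g (A⁻¹ / ((1 - ρ) * b) * I) := by
    have hterm (k : ℕ) : g k = A⁻¹ / ((1 - ρ) * b) *
        (((2 * k + 1)! : ℝ) / (k ! : ℝ) ^ 2 * (c / (4 * τ ^ 2)) ^ k / τ ^ 2) := by
      simp only [g]
      rw [hq_eq, div_pow, mul_pow (ρ * b), pow_add, pow_mul, ← hAτ]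
      field_simp
    rw [show g = _ from funext hterm]
    exact hsum.mul_left _
  refine ⟨hf ▸ hint.const_mul _, hg.summable, ?_⟩
  rw [hg.tsum_eq, hf, integral_const_mul, ← mul_assoc, mul_div_cancel₀ _ (by positivity)]
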